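/- arXiv:1807.07503 — 2 statements merged into one kernel-verified Lean document; each statement's English description precedes it below -/
import Mathlib

section
/- Let f be a Markov interval map and let x ∈ E_f. Then the generalized orbit of x avoids the partition endpoints: R_f(x) ∩ Γ = ∅. -/
open scoped Classical ENNReal

noncomputable section

/-- Partition and branch data for a Markov interval map with `n` Markov
subintervals.  `cm j` is the point `c_j⁻` and `cp j` is `c_j⁺` (with
`cm 0 = cp 0 = c₀` and `cm n = cp n = c_n`).  `f` is the globally defined map,
`F j` is the branch of `f` on the `j`-th Markov interval (indexed by
`j = 0, …, n-1`, corresponding to the interval `I_{j+1}` of the paper) and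
`F' j` is the derivative of that branch. -/
structure MarkovSystem (n : ℕ) where
  cm : ℕ → ℝ
  cp : ℕ → ℝ
  f : ℝ → ℝ
  F : ℕ → ℝ → ℝ
  F' : ℕ → ℝ → ℝ
  two_le : 2 ≤ n
  cm_zero : cm 0 = cp 0
  cm_n : cm n = cp n
  cm_le_cp : ∀ j ≤ n, cm j ≤ cp j
  cp_lt_cm : ∀ j < n, cp j < cm (j + 1)

namespace MarkovSystem

variable {n : ℕ} (M : MarkovSystem n)

/-- The Markov interval `I_{j+1} = [c_j⁺, c_{j+1}⁻]` (for `j < n`). -/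
def Ipart (j : ℕ) : Set ℝ := Set.Icc (M.cp j) (M.cm (j + 1))

/-- The escape interval `E_j = (c_j⁻, c_j⁺)` (for `1 ≤ j ≤ n-1`). -/
def Epart (j : ℕ) : Set ℝ := Set.Ioo (M.cm j) (M.cp j)

/-- The ambient interval `I = [c₀, c_n]`. -/
def itv : Set ℝ := Set.Icc (M.cm 0) (M.cm n)

/-- The domain of `f`, namely `⋃_{j=1}^n I_j`. -/
def dom : Set ℝ := ⋃ j ∈ Finset.range n, M.Ipart j

/-- The set `Γ` of partition boundary points. -/
def Gamma : Set ℝ := {y | ∃ j ≤ n, y = M.cm j ∨ y = M.cp j}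

/-- `q`-fold image of a set under `f`, applying `f` only where it is defined. -/
def iterImage : ℕ → Set ℝ → Set ℝ
  | 0, S => S
  | q + 1, S => M.f '' (iterImage q S ∩ M.dom)

/-- `f^k(x)` is defined, i.e. all earlier iterates lie in the domain. -/
def definedUpTo (k : ℕ) (x : ℝ) : Prop := ∀ l < k, M.f^[l] x ∈ M.dom

/-- The orbit equivalence relation `R_f`. -/
def Rrel (x y : ℝ) : Prop :=
  ∃ p q : ℕ, M.definedUpTo p x ∧ M.definedUpTo q y ∧ M.f^[p] x = M.f^[q] y

/-- The generalized orbit `R_f(x)` of a point `x ∈ I`. -/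
def Rclass (x : ℝ) : Set ℝ := {y | y ∈ M.itv ∧ M.Rrel x y}

/-- The maximal invariant set `Ω_f`. -/
def Omega : Set ℝ := {x | x ∈ M.itv ∧ ∀ k, M.f^[k] x ∈ M.dom}

/-- The escape set `E_f = I \ Ω_f`. -/
def Esc : Set ℝ := M.itv \ M.Omega

/-- The regular set `Λ_f = Ω_f \ R_f(Γ)`. -/
def Lambda : Set ℝ := {x | x ∈ M.Omega ∧ ∀ γ ∈ M.Gamma, ¬ M.Rrel x γ}

/-- The escape time of a point of the escape set. -/
def tau (x : ℝ) : ℕ := sInf {k | M.f^[k] x ∉ M.dom}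

/-- The final escape point `e(x) = f^{τ(x)}(x)`. -/
def e (x : ℝ) : ℝ := M.f^[M.tau x] x

/-- The transition-matrix condition `a_{ij} = 1`, i.e. `f(int I_i) ⊇ int I_j`. -/
def trans (i j : ℕ) : Prop := interior (M.Ipart j) ⊆ M.F i '' interior (M.Ipart i)

/-- The escape-transition condition `â_{ik} = 1`, i.e. `int I_i ∩ f⁻¹(E_k) ≠ ∅`. -/
def ahat (i k : ℕ) : Prop := (interior (M.Ipart i) ∩ M.F i ⁻¹' M.Epart k).Nonempty

end MarkovSystem

/-- The defining properties (P1)-(P4) of a Markov interval map, together with the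
compatibility of the global map `f` with the branches `F j`:  `f` agrees with `F j`
on `I_j` except possibly at a boundary point shared with an adjacent interval,
where `f` is given by one of the two adjacent branches. -/
structure IsMarkov {n : ℕ} (M : MarkovSystem n) : Prop where
  compat₁ : ∀ j < n, ∀ x ∈ M.Ipart j, (∀ k < n, k ≠ j → x ∉ M.Ipart k) → M.f x = M.F j x
  compat₂ : ∀ x ∈ M.dom, ∃ j, j < n ∧ x ∈ M.Ipart j ∧ M.f x = M.F j x
  maps_into : ∀ j < n, M.F j '' M.Ipart j ⊆ M.itv
  onto : M.itv ⊆ ⋃ j ∈ Finset.range n, M.F j '' M.Ipart j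
  markov : ∀ i < n, ∃ S T : Set ℕ, S ⊆ {j | j < n} ∧ T ⊆ {j | 1 ≤ j ∧ j < n} ∧
    M.F i '' M.Ipart i = (⋃ j ∈ S, M.Ipart j) ∪ (⋃ j ∈ T, M.Epart j)
  deriv : ∀ i < n, ∀ x ∈ M.Ipart i, HasDerivWithinAt (M.F i) (M.F' i x) (M.Ipart i) x
  derivCont : ∀ i < n, ContinuousOn (M.F' i) (M.Ipart i)
  mono : ∀ i < n, StrictMonoOn (M.F i) (M.Ipart i) ∨ StrictAntiOn (M.F i) (M.Ipart i)
  expansive : ∃ b > 1, ∀ i < n, ∀ x ∈ M.Ipart i, b < |M.F' i x|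
  aperiodic : ∀ i < n, ∃ q, M.dom ⊆ M.iterImage q (M.Ipart i)

namespace MarkovSystem

variable {n : ℕ} (M : MarkovSystem n)

lemma cp_lt_cm' {k l : ℕ} (hkl : k < l) (hl : l ≤ n) : M.cp k < M.cm l := by
  induction l with
  | zero => omega
  | succ m ih =>
    rcases Nat.lt_succ_iff_lt_or_eq.mp hkl with h | h
    · exact lt_of_lt_of_le (ih h (by omega))
        ((M.cm_le_cp m (by omega)).trans (le_of_lt (M.cp_lt_cm m (by omega))))
    · subst h; exact M.cp_lt_cm k (by omega)

lemma cm_le_cm' {k l : ℕ} (hkl : k ≤ l) (hl : l ≤ n) : M.cm k ≤ M.cm l := by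
  rcases eq_or_lt_of_le hkl with rfl | h
  · exact le_refl _
  · exact (M.cm_le_cp k (by omega)).trans (le_of_lt (M.cp_lt_cm' h hl))

lemma cp_le_cp' {k l : ℕ} (hkl : k ≤ l) (hl : l ≤ n) : M.cp k ≤ M.cp l := by
  rcases eq_or_lt_of_le hkl with rfl | h
  · exact le_refl _
  · exact (le_of_lt (M.cp_lt_cm' h hl)).trans (M.cm_le_cp l hl)

lemma cp_mem_Ipart {j : ℕ} (hj : j < n) : M.cp j ∈ M.Ipart j :=
  ⟨le_refl _, le_of_lt (M.cp_lt_cm j hj)⟩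

lemma cm_mem_Ipart {j : ℕ} (hj : j < n) : M.cm (j + 1) ∈ M.Ipart j :=
  ⟨le_of_lt (M.cp_lt_cm j hj), le_refl _⟩

lemma mem_dom_of_mem_Ipart {j : ℕ} (hj : j < n) {y : ℝ} (hy : y ∈ M.Ipart j) :
    y ∈ M.dom := by
  simp only [dom, Set.mem_iUnion, Finset.mem_range]
  exact ⟨j, hj, hy⟩

lemma Gamma_subset_dom : M.Gamma ⊆ M.dom := by
  have h2n := M.two_le
  rintro γ ⟨k, hk, hγ | hγ⟩
  · rcases Nat.eq_zero_or_pos k with rfl | hk0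
    · subst hγ
      refine M.mem_dom_of_mem_Ipart (j := 0) (by omega) ⟨le_of_eq M.cm_zero.symm, ?_⟩
      exact M.cm_zero ▸ le_of_lt (M.cp_lt_cm 0 (by omega))
    · subst hγ
      refine M.mem_dom_of_mem_Ipart (j := k - 1) (by omega) ?_
      have : k - 1 + 1 = k := by omega
      rw [Ipart, this]
      exact ⟨le_of_lt (this ▸ M.cp_lt_cm (k - 1) (by omega)), le_refl _⟩
  · rcases Nat.lt_or_ge k n with hkn | hkn
    · exact M.mem_dom_of_mem_Ipart hkn (hγ ▸ M.cp_mem_Ipart hkn)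
    · have hkn' : k = n := le_antisymm hk hkn
      refine M.mem_dom_of_mem_Ipart (j := n - 1) (by omega) ?_
      have h1 : n - 1 + 1 = n := by omega
      rw [Ipart, h1, hγ, hkn', ← M.cm_n]
      have h2 := M.cp_lt_cm (n - 1) (by omega)
      rw [h1] at h2
      exact ⟨le_of_lt h2, le_refl _⟩

lemma min_image_mem_Gamma (hM : IsMarkov M) {j : ℕ} (hj : j < n) {z : ℝ}
    (hz : z ∈ M.F j '' M.Ipart j) (hmin : ∀ w ∈ M.F j '' M.Ipart j, z ≤ w) :
    z ∈ M.Gamma := by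
  obtain ⟨S, T, hS, hT, him⟩ := hM.markov j hj
  rw [him] at hz hmin
  rcases hz with hz | hz
  · simp only [Set.mem_iUnion] at hz
    obtain ⟨s, hsS, hzs⟩ := hz
    have hsn : s < n := hS hsS
    have hle : z ≤ M.cp s := by
      refine hmin (M.cp s) (Or.inl ?_)
      simp only [Set.mem_iUnion]
      exact ⟨s, hsS, M.cp_mem_Ipart hsn⟩
    exact ⟨s, le_of_lt hsn, Or.inr (le_antisymm hle hzs.1)⟩
  · simp only [Set.mem_iUnion] at hz
    obtain ⟨t, htT, hzt⟩ := hz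
    exfalso
    have hw : (M.cm t + z) / 2 ∈ M.Epart t :=
      ⟨by linarith [hzt.1], by linarith [hzt.1, hzt.2]⟩
    have := hmin ((M.cm t + z) / 2) (Or.inr (by
      simp only [Set.mem_iUnion]; exact ⟨t, htT, hw⟩))
    linarith [hzt.1]

lemma max_image_mem_Gamma (hM : IsMarkov M) {j : ℕ} (hj : j < n) {z : ℝ}
    (hz : z ∈ M.F j '' M.Ipart j) (hmax : ∀ w ∈ M.F j '' M.Ipart j, w ≤ z) :
    z ∈ M.Gamma := by
  obtain ⟨S, T, hS, hT, him⟩ := hM.markov j hj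
  rw [him] at hz hmax
  rcases hz with hz | hz
  · simp only [Set.mem_iUnion] at hz
    obtain ⟨s, hsS, hzs⟩ := hz
    have hsn : s < n := hS hsS
    have hle : M.cm (s + 1) ≤ z := by
      refine hmax (M.cm (s + 1)) (Or.inl ?_)
      simp only [Set.mem_iUnion]
      exact ⟨s, hsS, M.cm_mem_Ipart hsn⟩
    exact ⟨s + 1, by omega, Or.inl (le_antisymm hzs.2 hle)⟩
  · simp only [Set.mem_iUnion] at hz
    obtain ⟨t, htT, hzt⟩ := hz
    exfalso
    have hw : (z + M.cp t) / 2 ∈ M.Epart t :=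
      ⟨by linarith [hzt.1, hzt.2], by linarith [hzt.2]⟩
    have := hmax ((z + M.cp t) / 2) (Or.inr (by
      simp only [Set.mem_iUnion]; exact ⟨t, htT, hw⟩))
    linarith [hzt.2]

lemma F_endpoints_mem_Gamma (hM : IsMarkov M) {j : ℕ} (hj : j < n) :
    M.F j (M.cp j) ∈ M.Gamma ∧ M.F j (M.cm (j + 1)) ∈ M.Gamma := by
  have hA := M.cp_mem_Ipart hj
  have hB := M.cm_mem_Ipart hj
  have hmemA : M.F j (M.cp j) ∈ M.F j '' M.Ipart j := ⟨_, hA, rfl⟩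
  have hmemB : M.F j (M.cm (j + 1)) ∈ M.F j '' M.Ipart j := ⟨_, hB, rfl⟩
  rcases hM.mono j hj with hm | hm
  · constructor
    · refine M.min_image_mem_Gamma hM hj hmemA ?_
      rintro w ⟨y, hy, rfl⟩
      exact hm.monotoneOn hA hy hy.1
    · refine M.max_image_mem_Gamma hM hj hmemB ?_
      rintro w ⟨y, hy, rfl⟩
      exact hm.monotoneOn hy hB hy.2
  · constructor
    · refine M.max_image_mem_Gamma hM hj hmemA ?_
      rintro w ⟨y, hy, rfl⟩
      exact hm.antitoneOn hA hy hy.1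
    · refine M.min_image_mem_Gamma hM hj hmemB ?_
      rintro w ⟨y, hy, rfl⟩
      exact hm.antitoneOn hy hB hy.2

lemma f_Gamma_mem_Gamma (hM : IsMarkov M) {γ : ℝ} (hγ : γ ∈ M.Gamma) :
    M.f γ ∈ M.Gamma := by
  obtain ⟨j, hjn, hγj, hfγ⟩ := hM.compat₂ γ (M.Gamma_subset_dom hγ)
  rw [hfγ]
  have hend : γ = M.cp j ∨ γ = M.cm (j + 1) := by
    obtain ⟨k, hk, hγk | hγk⟩ := hγ
    · -- γ = cm k
      rcases Nat.lt_or_ge k (j + 1) with hkj | hkj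
      · -- k ≤ j : cm k ≤ cp j, and cp j ≤ γ = cm k
        left
        have h1 : M.cm k ≤ M.cp j := (M.cm_le_cp k hk).trans (M.cp_le_cp' (by omega) (by omega))
        have h2 : M.cp j ≤ γ := hγj.1
        rw [hγk] at h2 ⊢
        linarith
      · rcases eq_or_lt_of_le hkj with h | h
        · right; rw [hγk, ← h]
        · -- k ≥ j + 2 : cm (j+1) < cm k = γ ≤ cm (j+1), contradiction
          exfalso
          have h1 : M.cm (j + 1) ≤ M.cp (j + 1) := M.cm_le_cp (j + 1) (by omega)
          have h2 : M.cp (j + 1) < M.cm k := M.cp_lt_cm' h hk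
          have h3 : γ ≤ M.cm (j + 1) := hγj.2
          rw [hγk] at h3
          linarith
    · -- γ = cp k
      rcases lt_trichotomy k j with hkj | rfl | hkj
      · exfalso
        have h1 : M.cp k < M.cm j := M.cp_lt_cm' hkj (by omega)
        have h2 : M.cm j ≤ M.cp j := M.cm_le_cp j (by omega)
        have h3 : M.cp j ≤ γ := hγj.1
        rw [hγk] at h3
        linarith
      · left; exact hγk
      · right
        have h1 : M.cm (j + 1) ≤ M.cm k := M.cm_le_cm' (by omega) hk
        have h2 : M.cm k ≤ M.cp k := M.cm_le_cp k hk
        have h3 : γ ≤ M.cm (j + 1) := hγj.2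
        rw [hγk] at h3 ⊢
        linarith [le_antisymm h3 (h1.trans h2)]
  obtain ⟨h1, h2⟩ := M.F_endpoints_mem_Gamma hM hjn
  rcases hend with rfl | rfl
  · exact h1
  · exact h2

lemma iterate_Gamma_mem_Gamma (hM : IsMarkov M) {γ : ℝ} (hγ : γ ∈ M.Gamma) (q : ℕ) :
    M.f^[q] γ ∈ M.Gamma := by
  induction q with
  | zero => simpa using hγ
  | succ m ih =>
    rw [Function.iterate_succ_apply']
    exact M.f_Gamma_mem_Gamma hM ih

end MarkovSystem

/-- If `x` is in the escape set, then the generalized orbit of `x` avoids the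
partition endpoints: `R_f(x) ∩ Γ = ∅`. -/
theorem Rclass_inter_Gamma_empty {n : ℕ} (M : MarkovSystem n) (hM : IsMarkov M)
    {x : ℝ} (hx : x ∈ M.Esc) :
    M.Rclass x ∩ M.Gamma = ∅ := by
  rw [Set.eq_empty_iff_forall_notMem]
  rintro y ⟨⟨hyI, p, q, hp, hq, heq⟩, hyΓ⟩
  obtain ⟨hxI, hxΩ⟩ := hx
  apply hxΩ
  refine ⟨hxI, fun k => ?_⟩
  rcases Nat.lt_or_ge k p with hkp | hkp
  · exact hp k hkp
  · have hΓ : M.f^[p] x ∈ M.Gamma := heq ▸ M.iterate_Gamma_mem_Gamma hM hyΓ q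
    have : M.f^[k] x = M.f^[k - p] (M.f^[p] x) := by
      rw [← Function.iterate_add_apply]
      congr 1
      omega
    rw [this]
    exact M.Gamma_subset_dom (M.iterate_Gamma_mem_Gamma hM hΓ (k - p))
end
end

section
/- Let f be a Markov interval map and x ∈ E_f. For each i ∈ {1,…,n} there is a unique bounded operator T_i on H_x with T_i δ_y = δ_{(f|_{I_i})^{-1}(y)} for y ∈ R_f(x) ∩ f(I_i) and T_i δ_y = 0 for y ∈ R_f(x) ∖ f(I_i). Its adjoint satisfies T_i* δ_y = δ_{f(y)} if y ∈ I_i and T_i* δ_y = 0 otherwise, and T_i* T_i δ_y = δ_y if y ∈ f(I_i) and 0 otherwise. In particular each T_i is a partial isometry: T_i T_i* T_i = T_i. -/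
/-!
The branch `w ↦ F_i w` on `R_f(x) ∩ I_i` is a partial bijection `σ` of `R_f(x)`. Precomposition
with a partial bijection of index sets is a contraction of `ℓ²` sending `δ_z` to `δ_w` when
`σ w = z` and to `0` when `z` is not in the range of `σ`; its adjoint is precomposition with
`σ⁻¹`. This gives existence and every formula of the statement, including `T T* T = T`.

Uniqueness needs that for `z ∈ R_f(x) ∩ F_i(I_i)` the preimage `w ∈ I_i` lies in `R_f(x)`, i.e.
that `f w = F_i w`. Otherwise `w` is an endpoint of `I_i`, so `F_i w` is an extreme point of
`F_i(I_i)`; as `F_i(I_i)` is a union of Markov intervals and gaps, `F_i w` is then an endpoint of a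
Markov interval. These boundary points are mapped to boundary points by `f`, so their forward
orbits never leave `dom f`, and `z ∈ R_f(x)` would force `x ∈ Ω_f`.
-/

open scoped Classical ENNReal

noncomputable section

namespace MarkovSystem

variable {n : ℕ} (M : MarkovSystem n)

/-- The Hilbert space `H_x = ℓ²(R_f(x))`. -/
abbrev Hsp (x : ℝ) : Type _ := lp (fun _ : M.Rclass x => ℂ) 2

/-- The canonical orthonormal basis vector `δ_z` of `H_x`, for `z ∈ R_f(x)`. -/
def dvec {x : ℝ} (z : M.Rclass x) : M.Hsp x := lp.single 2 z 1

/-- `T` is the bounded operator `T_i` on `H_x`, determined on the basis by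
`T_i δ_y = δ_{(f|_{I_i})⁻¹(y)}` if `y ∈ f(I_i)` and `T_i δ_y = 0` otherwise. -/
def IsBranchOp (x : ℝ) (i : ℕ) (T : M.Hsp x →L[ℂ] M.Hsp x) : Prop :=
  (∀ z w : M.Rclass x, (w : ℝ) ∈ M.Ipart i → M.F i w = (z : ℝ) →
      T (M.dvec z) = M.dvec w) ∧
  (∀ z : M.Rclass x, (z : ℝ) ∉ M.F i '' M.Ipart i → T (M.dvec z) = 0)

/-- `Pe` is the rank-one orthogonal projection onto `ℂ δ_{e(x)}`. -/
def IsEscProj (x : ℝ) (Pe : M.Hsp x →L[ℂ] M.Hsp x) : Prop :=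
  ∀ z : M.Rclass x, Pe (M.dvec z) = if (z : ℝ) = M.e x then M.dvec z else 0

end MarkovSystem

open scoped Topology

theorem dite_exists_choose_eq_some_iff {β : Type*} {p : β → Prop}
    (hp : ∀ b b', p b → p b' → b = b') {b : β} :
    (if h : ∃ b, p b then some h.choose else none) = some b ↔ p b := by
  constructor
  · intro h
    split_ifs at h with hex
    exact Option.some.inj h ▸ hex.choose_spec
  · intro hb
    rw [dif_pos ⟨b, hb⟩, hp _ _ (Exists.choose_spec _) hb]

theorem lp.ext_continuousLinearMap_single_one {𝕜 ι F : Type*} [NormedField 𝕜]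
    [DecidableEq ι] [AddCommMonoid F] [Module 𝕜 F] [TopologicalSpace F] [T2Space F]
    {p : ℝ≥0∞} [Fact (1 ≤ p)] (hp : p ≠ ∞) {S T : lp (fun _ : ι => 𝕜) p →L[𝕜] F}
    (h : ∀ i, S (lp.single p i 1) = T (lp.single p i 1)) : S = T :=
  lp.ext_continuousLinearMap hp fun i => ContinuousLinearMap.ext_ring (h i)

theorem lp.adjoint_apply_eq_inner_single {𝕜 ι κ : Type*} [RCLike 𝕜] [DecidableEq ι]
    (T : lp (fun _ : ι => 𝕜) 2 →L[𝕜] lp (fun _ : κ => 𝕜) 2) (u : lp (fun _ : κ => 𝕜) 2)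
    (i : ι) : ContinuousLinearMap.adjoint T u i = inner 𝕜 (T (lp.single 2 i 1)) u := by
  rw [← ContinuousLinearMap.adjoint_inner_right, lp.inner_single_left]
  simp

namespace PEquiv

variable {α β : Type*}

def ofRel (r : α → β → Prop) (hfun : ∀ a b b', r a b → r a b' → b = b')
    (hinj : ∀ a a' b, r a b → r a' b → a = a') : α ≃. β where
  toFun a := if h : ∃ b, r a b then some h.choose else none
  invFun b := if h : ∃ a, r a b then some h.choose else none
  inv a b := by
    rw [dite_exists_choose_eq_some_iff (hinj · · b), dite_exists_choose_eq_some_iff (hfun a)]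

theorem ofRel_eq_some_iff {r : α → β → Prop} {hfun hinj} {a : α} {b : β} :
    ofRel r hfun hinj a = some b ↔ r a b :=
  dite_exists_choose_eq_some_iff (hfun a)

theorem summable_and_tsum_elim_le (σ : α ≃. β) {g : β → ℝ} (hg : 0 ≤ g) (hs : Summable g) :
    Summable (fun a => (σ a).elim 0 g) ∧ ∑' a, (σ a).elim 0 g ≤ ∑' b, g b := by
  let v : {a // (σ a).isSome} → α := Subtype.val
  let e : {a // (σ a).isSome} → β := fun d => (σ d).get d.2
  have hv : Function.Injective v := Subtype.val_injective
  have he : Function.Injective e := fun d d' h =>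
    Subtype.ext (σ.inj (Option.get_mem d.2) (h ▸ Option.get_mem d'.2 : e d ∈ σ d'))
  have hcomp : (fun a => (σ a).elim 0 g) ∘ v = g ∘ e := by
    ext d
    conv_lhs => rw [Function.comp_apply, ← Option.some_get d.2]
    rfl
  have hsupp : Function.support (fun a => (σ a).elim 0 g) ⊆ Set.range v := by
    intro a ha
    cases h : σ a with
    | none => simp [h] at ha
    | some b => exact ⟨⟨a, by simp [h]⟩, rfl⟩
  refine ⟨(hv.summable_iff fun a ha => ?_).1 ?_, ?_⟩
  · exact Function.notMem_support.1 fun h => ha (hsupp h)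
  · rw [hcomp]; exact hs.comp_injective he
  · rw [← hv.tsum_eq hsupp]
    exact (congrArg tsum hcomp).le.trans (tsum_comp_le_tsum_of_inj hs hg he)

section lp

variable {𝕜 ι κ : Type*} [RCLike 𝕜]

theorem summable_and_tsum_norm_rpow_elim_le (σ : ι ≃. κ) (a : lp (fun _ : κ => 𝕜) 2) :
    Summable (fun i => ‖(σ i).elim 0 a‖ ^ (2 : ℝ≥0∞).toReal) ∧
      ∑' i, ‖(σ i).elim 0 a‖ ^ (2 : ℝ≥0∞).toReal ≤ ‖a‖ ^ (2 : ℝ≥0∞).toReal := by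
  have ht : 0 < (2 : ℝ≥0∞).toReal := by norm_num
  have hnorm : ∀ i, ‖(σ i).elim 0 a‖ ^ (2 : ℝ≥0∞).toReal =
      (σ i).elim 0 (fun k => ‖a k‖ ^ (2 : ℝ≥0∞).toReal) := fun i => by
    cases σ i <;> simp
  simp only [hnorm, lp.norm_rpow_eq_tsum ht]
  exact σ.summable_and_tsum_elim_le (fun k => by positivity) ((lp.memℓp a).summable ht)

def lpComp (σ : ι ≃. κ) : lp (fun _ : κ => 𝕜) 2 →L[𝕜] lp (fun _ : ι => 𝕜) 2 :=
  LinearMap.mkContinuous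
    { toFun a := ⟨fun i => (σ i).elim 0 a,
        memℓp_gen (σ.summable_and_tsum_norm_rpow_elim_le a).1⟩
      map_add' a b := lp.ext <| funext fun i => by
        change (σ i).elim 0 (a + b : lp _ 2) = (σ i).elim 0 a + (σ i).elim 0 b
        cases σ i
        exacts [(add_zero 0).symm, rfl]
      map_smul' c a := lp.ext <| funext fun i => by
        change (σ i).elim 0 (c • a : lp _ 2) = c • (σ i).elim 0 a
        cases σ i
        exacts [(smul_zero c).symm, rfl] }
    1 fun a => by
      rw [one_mul]
      exact lp.norm_le_of_tsum_le (by norm_num) (norm_nonneg a)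
        (σ.summable_and_tsum_norm_rpow_elim_le a).2

theorem lpComp_apply (σ : ι ≃. κ) (a : lp (fun _ : κ => 𝕜) 2) (i : ι) :
    σ.lpComp a i = (σ i).elim 0 a :=
  rfl

variable [DecidableEq κ]

theorem lpComp_single_apply (σ : ι ≃. κ) (k : κ) (c : 𝕜) (i : ι) :
    σ.lpComp (lp.single 2 k c) i = if k ∈ σ i then c else 0 := by
  rw [lpComp_apply]
  rcases σ i with _ | k'
  · simp
  · simp [Pi.single_apply, eq_comm]

theorem lpComp_single_of_symm_eq_none (σ : ι ≃. κ) {k : κ} (h : σ.symm k = none) (c : 𝕜) :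
    σ.lpComp (lp.single 2 k c) = 0 := by
  ext j
  rw [lpComp_single_apply, if_neg fun hk => by simpa [h] using σ.mem_iff_mem.2 hk]
  rfl

variable [DecidableEq ι]

theorem lpComp_single_of_mem (σ : ι ≃. κ) {i : ι} {k : κ} (h : k ∈ σ i) (c : 𝕜) :
    σ.lpComp (lp.single 2 k c) = lp.single 2 i c := by
  ext j
  rw [lpComp_single_apply, lp.single_apply, Pi.single_apply]
  exact if_congr ⟨fun h' => σ.inj h' h, fun hj => hj ▸ h⟩ rfl rfl

theorem adjoint_lpComp (σ : ι ≃. κ) :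
    ContinuousLinearMap.adjoint (σ.lpComp (𝕜 := 𝕜)) = σ.symm.lpComp := by
  refine lp.ext_continuousLinearMap_single_one (by norm_num) fun i => ?_
  ext k
  rw [lp.adjoint_apply_eq_inner_single, lp.inner_single_right, lpComp_single_apply,
    lpComp_single_apply]
  simp only [σ.mem_iff_mem]
  split_ifs <;> simp

theorem adjoint_comp_lpComp_single (σ : ι ≃. κ) (k : κ) (c : 𝕜) :
    (ContinuousLinearMap.adjoint σ.lpComp ∘L σ.lpComp) (lp.single 2 k c : lp (fun _ => 𝕜) 2) =
      if (σ.symm k).isSome then lp.single 2 k c else 0 := by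
  rw [ContinuousLinearMap.comp_apply, adjoint_lpComp]
  cases h : σ.symm k with
  | none => simp [σ.lpComp_single_of_symm_eq_none h]
  | some i =>
    rw [σ.lpComp_single_of_mem (σ.eq_some_iff.1 h), σ.symm.lpComp_single_of_mem h]
    simp

theorem lpComp_comp_adjoint_comp_lpComp (σ : ι ≃. κ) :
    σ.lpComp ∘L ContinuousLinearMap.adjoint σ.lpComp ∘L σ.lpComp = σ.lpComp (𝕜 := 𝕜) := by
  refine lp.ext_continuousLinearMap_single_one (by norm_num) fun k => ?_
  rw [ContinuousLinearMap.comp_apply, adjoint_comp_lpComp_single]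
  split_ifs with h
  · rfl
  · rw [map_zero, σ.lpComp_single_of_symm_eq_none (Option.not_isSome_iff_eq_none.1 h)]

end lp

end PEquiv

theorem IsLeast.notMem_interior {α : Type*} [TopologicalSpace α] [Preorder α] {s : Set α}
    {a : α} [(𝓝[<] a).NeBot] (h : IsLeast s a) : a ∉ interior s := fun ha =>
  let ⟨_, hba, hb⟩ :=
    Filter.Eventually.exists_lt (p := (· ∈ s)) (mem_interior_iff_mem_nhds.1 ha)
  (h.2 hb).not_gt hba

theorem IsGreatest.notMem_interior {α : Type*} [TopologicalSpace α] [Preorder α] {s : Set α}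
    {a : α} [(𝓝[>] a).NeBot] (h : IsGreatest s a) : a ∉ interior s := fun ha =>
  let ⟨_, hab, hb⟩ :=
    Filter.Eventually.exists_gt (p := (· ∈ s)) (mem_interior_iff_mem_nhds.1 ha)
  (h.2 hb).not_gt hab

namespace MarkovSystem

variable {n : ℕ} {M : MarkovSystem n}

theorem cp_lt_cm_of_lt {i j : ℕ} (hij : i < j) (hj : j ≤ n) : M.cp i < M.cm j := by
  induction j, hij using Nat.le_induction with
  | base => exact M.cp_lt_cm i (by omega)
  | succ k hik ih =>
    calc M.cp i < M.cm k := ih (by omega)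
      _ ≤ M.cp k := M.cm_le_cp k (by omega)
      _ < M.cm (k + 1) := M.cp_lt_cm k (by omega)

theorem cm_le_cm_of_le {i j : ℕ} (hij : i ≤ j) (hj : j ≤ n) : M.cm i ≤ M.cm j := by
  rcases hij.eq_or_lt with rfl | hij
  · rfl
  · exact (M.cm_le_cp i (by omega)).trans (cp_lt_cm_of_lt hij hj).le

theorem cp_le_cp_of_le {i j : ℕ} (hij : i ≤ j) (hj : j ≤ n) : M.cp i ≤ M.cp j := by
  rcases hij.eq_or_lt with rfl | hij
  · rfl
  · exact (cp_lt_cm_of_lt hij hj).le.trans (M.cm_le_cp j hj)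

theorem cm_le_cp_of_le {i j : ℕ} (hij : i ≤ j) (hj : j ≤ n) : M.cm i ≤ M.cp j :=
  (cm_le_cm_of_le hij hj).trans (M.cm_le_cp j hj)

theorem Ipart_subset_itv {i : ℕ} (hi : i < n) : M.Ipart i ⊆ M.itv := fun _ hw =>
  ⟨(cm_le_cp_of_le i.zero_le (by omega)).trans hw.1, hw.2.trans (cm_le_cm_of_le hi le_rfl)⟩

theorem Ipart_subset_dom {i : ℕ} (hi : i < n) : M.Ipart i ⊆ M.dom :=
  Set.subset_biUnion_of_mem (u := M.Ipart) (Finset.mem_coe.2 (Finset.mem_range.2 hi))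

theorem endpoint_mem_Ipart {i : ℕ} (hi : i < n) {w : ℝ} (hw : w = M.cp i ∨ w = M.cm (i + 1)) :
    w ∈ M.Ipart i := by
  have hle := (M.cp_lt_cm i hi).le
  rcases hw with rfl | rfl
  exacts [⟨le_rfl, hle⟩, ⟨hle, le_rfl⟩]

theorem endpoint_mem_Gamma_inter_dom {i : ℕ} (hi : i < n) {w : ℝ}
    (hw : w = M.cp i ∨ w = M.cm (i + 1)) : w ∈ M.Gamma ∩ M.dom := by
  refine ⟨?_, Ipart_subset_dom hi (endpoint_mem_Ipart hi hw)⟩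
  rcases hw with rfl | rfl
  exacts [⟨i, hi.le, Or.inr rfl⟩, ⟨i + 1, hi, Or.inl rfl⟩]

theorem eq_endpoint_of_mem_Gamma {j : ℕ} (hj : j < n) {γ : ℝ} (hγ : γ ∈ M.Gamma)
    (hγj : γ ∈ M.Ipart j) : γ = M.cp j ∨ γ = M.cm (j + 1) := by
  obtain ⟨k, hk, rfl | rfl⟩ := hγ
  · rcases le_or_gt k j with hkj | hkj
    · exact Or.inl (le_antisymm (cm_le_cp_of_le hkj hj.le) hγj.1)
    · exact Or.inr (le_antisymm hγj.2 (cm_le_cm_of_le hkj hk))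
  · rcases le_or_gt k j with hkj | hkj
    · exact Or.inl (le_antisymm (cp_le_cp_of_le hkj hj.le) hγj.1)
    · exact Or.inr (le_antisymm hγj.2 (cm_le_cp_of_le hkj hk))

theorem eq_endpoint_of_mem_Ipart_of_ne {i j : ℕ} (hi : i < n) (hj : j < n) (hij : j ≠ i)
    {w : ℝ} (hwi : w ∈ M.Ipart i) (hwj : w ∈ M.Ipart j) : w = M.cp i ∨ w = M.cm (i + 1) := by
  rcases hij.lt_or_gt with hji | hij
  · exact Or.inl (le_antisymm (hwj.2.trans (cm_le_cp_of_le hji hi.le)) hwi.1)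
  · exact Or.inr (le_antisymm hwi.2 ((cm_le_cp_of_le hij hj.le).trans hwj.1))

theorem mem_Gamma_inter_dom_of_notMem_interior {S T : Set ℕ} (hS : S ⊆ {j | j < n}) {z : ℝ}
    (hz : z ∈ (⋃ j ∈ S, M.Ipart j) ∪ ⋃ k ∈ T, M.Epart k)
    (hint : z ∉ interior ((⋃ j ∈ S, M.Ipart j) ∪ ⋃ k ∈ T, M.Epart k)) :
    z ∈ M.Gamma ∩ M.dom := by
  set U := (⋃ j ∈ S, M.Ipart j) ∪ ⋃ k ∈ T, M.Epart k
  rcases hz with hz | hz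
  · obtain ⟨j, hjS, hzj⟩ := Set.mem_iUnion₂.1 hz
    refine endpoint_mem_Gamma_inter_dom (hS hjS) ?_
    by_contra! hne
    have hIoo : Set.Ioo (M.cp j) (M.cm (j + 1)) ⊆ interior U :=
      isOpen_Ioo.subset_interior_iff.2 <| Set.Ioo_subset_Icc_self.trans <|
        (Set.subset_biUnion_of_mem (u := M.Ipart) hjS).trans Set.subset_union_left
    exact hint (hIoo ⟨hzj.1.lt_of_ne (Ne.symm hne.1), hzj.2.lt_of_ne hne.2⟩)
  · obtain ⟨k, hkT, hzk⟩ := Set.mem_iUnion₂.1 hz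
    have hE : M.Epart k ⊆ interior U := isOpen_Ioo.subset_interior_iff.2 <|
      (Set.subset_biUnion_of_mem (u := M.Epart) hkT).trans Set.subset_union_right
    exact (hint (hE hzk)).elim

theorem injOn_F (hM : IsMarkov M) {i : ℕ} (hi : i < n) : Set.InjOn (M.F i) (M.Ipart i) :=
  (hM.mono i hi).elim StrictMonoOn.injOn StrictAntiOn.injOn

theorem F_endpoint_notMem_interior (hM : IsMarkov M) {i : ℕ} (hi : i < n) {w : ℝ}
    (hw : w = M.cp i ∨ w = M.cm (i + 1)) : M.F i w ∉ interior (M.F i '' M.Ipart i) := by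
  have hle := (M.cp_lt_cm i hi).le
  rcases hM.mono i hi with hF | hF <;> rcases hw with rfl | rfl
  · exact (hF.monotoneOn.map_isLeast (isLeast_Icc hle)).notMem_interior
  · exact (hF.monotoneOn.map_isGreatest (isGreatest_Icc hle)).notMem_interior
  · exact (hF.antitoneOn.map_isLeast (isLeast_Icc hle)).notMem_interior
  · exact (hF.antitoneOn.map_isGreatest (isGreatest_Icc hle)).notMem_interior

theorem F_endpoint_mem_Gamma_inter_dom (hM : IsMarkov M) {i : ℕ} (hi : i < n) {w : ℝ}
    (hw : w = M.cp i ∨ w = M.cm (i + 1)) : M.F i w ∈ M.Gamma ∩ M.dom := by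
  obtain ⟨S, T, hS, -, him⟩ := hM.markov i hi
  exact mem_Gamma_inter_dom_of_notMem_interior hS (him ▸ ⟨w, endpoint_mem_Ipart hi hw, rfl⟩)
    (him ▸ F_endpoint_notMem_interior hM hi hw)

theorem mapsTo_f_Gamma_inter_dom (hM : IsMarkov M) :
    Set.MapsTo M.f (M.Gamma ∩ M.dom) (M.Gamma ∩ M.dom) := fun γ hγ => by
  obtain ⟨j, hj, hγj, hfγ⟩ := hM.compat₂ γ hγ.2
  exact hfγ ▸ F_endpoint_mem_Gamma_inter_dom hM hj (eq_endpoint_of_mem_Gamma hj hγ.1 hγj)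

theorem not_rrel_of_mem_Esc (hM : IsMarkov M) {x γ : ℝ} (hx : x ∈ M.Esc)
    (hγ : γ ∈ M.Gamma ∩ M.dom) : ¬ M.Rrel x γ := by
  rintro ⟨p, q, hp, -, heq⟩
  refine hx.2 ⟨hx.1, fun k => ?_⟩
  rcases lt_or_ge k p with hk | hk
  · exact hp k hk
  · rw [← Nat.sub_add_cancel hk, Function.iterate_add_apply, heq, ← Function.iterate_add_apply]
    exact ((mapsTo_f_Gamma_inter_dom hM).iterate _ hγ).2

theorem eq_endpoint_of_f_ne_F (hM : IsMarkov M) {i : ℕ} (hi : i < n) {w : ℝ}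
    (hw : w ∈ M.Ipart i) (hne : M.f w ≠ M.F i w) : w = M.cp i ∨ w = M.cm (i + 1) := by
  obtain ⟨j, hj, hwj, hfw⟩ := hM.compat₂ w (Ipart_subset_dom hi hw)
  exact eq_endpoint_of_mem_Ipart_of_ne hi hj (fun h => hne (h ▸ hfw)) hw hwj

theorem rrel_of_rrel_f {x w : ℝ} (hw : w ∈ M.dom) (h : M.Rrel x (M.f w)) : M.Rrel x w := by
  obtain ⟨p, q, hp, hq, heq⟩ := h
  refine ⟨p, q + 1, hp, fun l hl => ?_, by rwa [Function.iterate_succ_apply]⟩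
  cases l with
  | zero => exact hw
  | succ l => rw [Function.iterate_succ_apply]; exact hq l (by omega)

theorem mem_Rclass_of_F_mem_Rclass (hM : IsMarkov M) {x : ℝ} (hx : x ∈ M.Esc) {i : ℕ}
    (hi : i < n) {w : ℝ} (hw : w ∈ M.Ipart i) (hFw : M.F i w ∈ M.Rclass x) :
    w ∈ M.Rclass x := by
  have hfw : M.f w = M.F i w := by
    by_contra hne
    exact not_rrel_of_mem_Esc hM hx
      (F_endpoint_mem_Gamma_inter_dom hM hi (eq_endpoint_of_f_ne_F hM hi hw hne)) hFw.2
  exact ⟨Ipart_subset_itv hi hw, rrel_of_rrel_f (Ipart_subset_dom hi hw) (hfw ▸ hFw.2)⟩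

def branchPEquiv (hM : IsMarkov M) {i : ℕ} (hi : i < n) (x : ℝ) : M.Rclass x ≃. M.Rclass x :=
  PEquiv.ofRel (fun w z => (w : ℝ) ∈ M.Ipart i ∧ M.F i w = z)
    (fun _ _ _ h h' => Subtype.ext (h.2.symm.trans h'.2))
    (fun _ _ _ h h' => Subtype.ext (injOn_F hM hi h.1 h'.1 (h.2.trans h'.2.symm)))

variable (hM : IsMarkov M) {i : ℕ} (hi : i < n) {x : ℝ}

theorem branchPEquiv_eq_some_iff {w z : M.Rclass x} :
    branchPEquiv hM hi x w = some z ↔ (w : ℝ) ∈ M.Ipart i ∧ M.F i w = z :=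
  PEquiv.ofRel_eq_some_iff

theorem isSome_branchPEquiv_symm_iff (hx : x ∈ M.Esc) (z : M.Rclass x) :
    ((branchPEquiv hM hi x).symm z).isSome ↔ (z : ℝ) ∈ M.F i '' M.Ipart i := by
  rw [Option.isSome_iff_exists]
  constructor
  · rintro ⟨w, hw⟩
    exact ⟨w, (branchPEquiv_eq_some_iff hM hi).1 ((PEquiv.eq_some_iff _).1 hw)⟩
  · rintro ⟨w, hw, hFw⟩
    have hwR := mem_Rclass_of_F_mem_Rclass hM hx hi hw (hFw ▸ z.2)
    exact ⟨⟨w, hwR⟩, (PEquiv.eq_some_iff _).2 ((branchPEquiv_eq_some_iff hM hi).2 ⟨hw, hFw⟩)⟩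

theorem isBranchOp_lpComp_branchPEquiv : M.IsBranchOp x i (branchPEquiv hM hi x).lpComp := by
  refine ⟨fun z w hw hFw => ?_, fun z hz => ?_⟩
  · exact PEquiv.lpComp_single_of_mem _ ((branchPEquiv_eq_some_iff hM hi).2 ⟨hw, hFw⟩) (1 : ℂ)
  · refine PEquiv.lpComp_single_of_symm_eq_none _ (Option.eq_none_iff_forall_ne_some.2 ?_) (1 : ℂ)
    intro w hw
    exact hz ⟨w, (branchPEquiv_eq_some_iff hM hi).1 ((PEquiv.eq_some_iff _).1 hw)⟩

theorem isBranchOp_iff (hx : x ∈ M.Esc) {T : M.Hsp x →L[ℂ] M.Hsp x} :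
    M.IsBranchOp x i T ↔ T = (branchPEquiv hM hi x).lpComp := by
  refine ⟨fun hT => ?_, fun h => h ▸ isBranchOp_lpComp_branchPEquiv hM hi⟩
  have hσ := isBranchOp_lpComp_branchPEquiv hM hi (x := x)
  refine lp.ext_continuousLinearMap_single_one (by norm_num) fun z => ?_
  by_cases hz : (z : ℝ) ∈ M.F i '' M.Ipart i
  · obtain ⟨w, hw, hFw⟩ := hz
    have hwR := mem_Rclass_of_F_mem_Rclass hM hx hi hw (hFw ▸ z.2)
    exact (hT.1 z ⟨w, hwR⟩ hw hFw).trans (hσ.1 z ⟨w, hwR⟩ hw hFw).symm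
  · exact (hT.2 z hz).trans (hσ.2 z hz).symm

end MarkovSystem

open ContinuousLinearMap in
/-- For `x ∈ E_f` and each `i`, there is a unique bounded operator `T_i` on
`H_x` with `T_i δ_y = δ_{(f|_{I_i})⁻¹(y)}` for `y ∈ R_f(x) ∩ f(I_i)` and
`T_i δ_y = 0` otherwise.  Its adjoint satisfies `T_i* δ_y = δ_{f(y)}` if
`y ∈ I_i` and `T_i* δ_y = 0` otherwise, `T_i* T_i δ_y = δ_y` if `y ∈ f(I_i)`
and `0` otherwise; in particular `T_i` is a partial isometry:
`T_i T_i* T_i = T_i`. -/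
theorem branch_operator_exists_unique {n : ℕ} (M : MarkovSystem n) (hM : IsMarkov M)
    {x : ℝ} (hx : x ∈ M.Esc) (i : ℕ) (hi : i < n) :
    (∃! T : M.Hsp x →L[ℂ] M.Hsp x, M.IsBranchOp x i T) ∧
    ∀ T : M.Hsp x →L[ℂ] M.Hsp x, M.IsBranchOp x i T →
      (∀ y z : M.Rclass x, (y : ℝ) ∈ M.Ipart i → M.F i y = (z : ℝ) →
        (adjoint T) (M.dvec y) = M.dvec z) ∧
      (∀ y : M.Rclass x, (y : ℝ) ∉ M.Ipart i → (adjoint T) (M.dvec y) = 0) ∧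
      (∀ y : M.Rclass x, (adjoint T * T) (M.dvec y) =
        if (y : ℝ) ∈ M.F i '' M.Ipart i then M.dvec y else 0) ∧
      T * adjoint T * T = T := by
  set σ := MarkovSystem.branchPEquiv hM hi x
  have hiff := fun T => MarkovSystem.isBranchOp_iff hM hi hx (T := T)
  refine ⟨⟨σ.lpComp, (hiff _).2 rfl, fun T hT => (hiff T).1 hT⟩, fun T hT => ?_⟩
  obtain rfl := (hiff T).1 hT
  refine ⟨fun y z hy hz => ?_, fun y hy => ?_, fun y => ?_, ?_⟩
  · rw [PEquiv.adjoint_lpComp]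
    exact σ.symm.lpComp_single_of_mem
      (σ.mem_iff_mem.2 ((MarkovSystem.branchPEquiv_eq_some_iff hM hi).2 ⟨hy, hz⟩)) (1 : ℂ)
  · rw [PEquiv.adjoint_lpComp]
    refine σ.symm.lpComp_single_of_symm_eq_none (Option.eq_none_iff_forall_ne_some.2 ?_) (1 : ℂ)
    exact fun z hz => hy ((MarkovSystem.branchPEquiv_eq_some_iff hM hi).1 hz).1
  · rw [mul_def, MarkovSystem.dvec, PEquiv.adjoint_comp_lpComp_single]
    exact if_congr (MarkovSystem.isSome_branchPEquiv_symm_iff hM hi hx y) rfl rfl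
  · rw [mul_assoc, mul_def, mul_def, PEquiv.lpComp_comp_adjoint_comp_lpComp]
end
end
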